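/- arXiv:1603.07217 — 3 statements merged into one kernel-verified Lean document; each statement's English description precedes it below -/
import Mathlib

section
/- If u, v, w are words over an alphabet A with |u| ≥ |w|, then in the queue monoid, u v w̄ ≡ u w̄ v, where w̄ denotes the sequence of read actions corresponding to w. -/
/-- One-step action of a queue symbol (`Sum.inl a` = write `a`, `Sum.inr a` = read `a`)
on a queue state (`none` = error state ⊥). -/
def qstep (A : Type) [DecidableEq A] : Option (List A) → A ⊕ A → Option (List A)
  | none, _ => none
  | some q, Sum.inl a => some (q ++ [a])
  | some q, Sum.inr a =>
      match q with
      | [] => none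
      | b :: q' => if b = a then some q' else none

/-- Action of a word of queue operations on a queue state. -/
def qact (A : Type) [DecidableEq A] (q : Option (List A)) (u : List (A ⊕ A)) :
    Option (List A) :=
  u.foldl (qstep A) q

/-- Equivalence of action sequences: same effect on every queue state. -/
def QEquiv (A : Type) [DecidableEq A] (u v : List (A ⊕ A)) : Prop :=
  ∀ q : Option (List A), qact A q u = qact A q v

/-- The sequence of write actions of a word. -/
def wr {A : Type} (u : List A) : List (A ⊕ A) := u.map Sum.inl

/-- The sequence of read actions of a word. -/
def rd {A : Type} (u : List A) : List (A ⊕ A) := u.map Sum.inr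

/-!
Writing `u` and then `v` turns a queue `q` into `q ++ u ++ v`. Since `|w| ≤ |q ++ u|`, reading
`w` from `q ++ u ++ v` only inspects letters of `q ++ u`, so it has the same outcome as reading
`w` from `q ++ u` and appending `v` afterwards.
-/

section QueueAction

variable {A : Type} [DecidableEq A]

theorem qact_append (q : Option (List A)) (x y : List (A ⊕ A)) :
    qact A q (x ++ y) = qact A (qact A q x) y :=
  List.foldl_append

theorem qact_none (x : List (A ⊕ A)) : qact A none x = none := by
  induction x with
  | nil => rfl
  | cons _ _ ih => exact ih

theorem qact_wr (q : Option (List A)) (v : List A) :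
    qact A q (wr v) = q.map (· ++ v) := by
  induction v generalizing q with
  | nil => cases q <;> simp [qact, wr]
  | cons a v ih =>
    cases q with
    | none => exact qact_none _
    | some q => simpa [qact, wr, qstep] using ih (some (q ++ [a]))

theorem qact_rd_append {w q : List A} (v : List A) (h : w.length ≤ q.length) :
    qact A (some (q ++ v)) (rd w) = (qact A (some q) (rd w)).map (· ++ v) := by
  induction w generalizing q with
  | nil => rfl
  | cons a w ih =>
    cases q with
    | nil => simp at h
    | cons b q =>
      change qact A (qstep A _ (Sum.inr a)) (rd w) =
        (qact A (qstep A _ (Sum.inr a)) (rd w)).map (· ++ v)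
      by_cases hb : b = a
      · simpa only [List.cons_append, qstep, hb, if_true] using ih (Nat.le_of_succ_le_succ h)
      · simp only [List.cons_append, qstep, hb, if_false, qact_none, Option.map_none]

end QueueAction

/-- If `|u| ≥ |w|` then `u v w̄ ≡ u w̄ v` in the queue monoid. -/
theorem stmt1 (A : Type) [DecidableEq A] (u v w : List A)
    (h : w.length ≤ u.length) :
    QEquiv A (wr u ++ wr v ++ rd w) (wr u ++ rd w ++ wr v) := by
  intro q
  simp only [qact_append, qact_wr]
  cases q with
  | none => simp only [Option.map_none, qact_none]
  | some q =>
    simp only [Option.map_some]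
    exact qact_rd_append v (by rw [List.length_append]; omega)
end

section
/- Let (Γ, I) be an independence alphabet, η : M(Γ, I) → Q an embedding into the queue monoid, and a ∈ Γ a letter with both π(η(a)) ≠ ε and π̄(η(a)) ≠ ε. Then a has degree at most 1 in the graph (Γ, I), i.e., there is at most one b ∈ Γ with (a, b) ∈ I. -/
/-- The congruence on the free monoid of queue actions identifying sequences with the
same effect on every queue state. -/
def queueCon (A : Type) [DecidableEq A] : Con (FreeMonoid (A ⊕ A)) where
  r u v := QEquiv A u.toList v.toList
  iseqv := ⟨fun _ _ => rfl, fun h q => (h q).symm, fun h1 h2 q => (h1 q).trans (h2 q)⟩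
  mul' := by
    intro u v u' v' hu hv q
    have h1 := hu q
    have h2 := hv (qact A q v.toList)
    show qact A q (u * u').toList = qact A q (v * v').toList
    rw [FreeMonoid.toList_mul, FreeMonoid.toList_mul]
    unfold qact at h1 h2 ⊢
    rw [List.foldl_append, List.foldl_append, h1, h2]

/-- The queue monoid over the alphabet `A`. -/
abbrev QueueMonoid (A : Type) [DecidableEq A] := (queueCon A).Quotient

/-- The congruence on the free monoid generated by `ab = ba` for independent `(a,b)`. -/
def traceCon {Γ : Type} (I : Γ → Γ → Prop) : Con (FreeMonoid Γ) :=
  conGen fun u v => ∃ a b : Γ, I a b ∧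
    u = FreeMonoid.of a * FreeMonoid.of b ∧ v = FreeMonoid.of b * FreeMonoid.of a

/-- The trace monoid of the independence alphabet `(Γ, I)`. -/
abbrev TraceMonoid {Γ : Type} (I : Γ → Γ → Prop) := (traceCon I).Quotient

/-- Positive projection: erase all read actions. -/
def ppr {A : Type} (u : List (A ⊕ A)) : List A :=
  u.filterMap (Sum.elim some fun _ => none)

/-- Negative projection: erase all write actions (mapping ā to a). -/
def npr {A : Type} (u : List (A ⊕ A)) : List A :=
  u.filterMap (Sum.elim (fun _ => none) some)

/-- `a ∈ Γ₊`: some (equivalently, every) representative of `η(a)` has nonempty positive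
projection and empty negative projection. -/
def GammaPlus {Γ A : Type} [DecidableEq A] (I : Γ → Γ → Prop)
    (η : TraceMonoid I →* QueueMonoid A) (a : Γ) : Prop :=
  ∃ w : List (A ⊕ A),
    (queueCon A).mk' (FreeMonoid.ofList w) = η ((traceCon I).mk' (FreeMonoid.of a)) ∧
    ppr w ≠ [] ∧ npr w = []

/-- `a ∈ Γ₋`: some representative of `η(a)` has empty positive projection and nonempty
negative projection. -/
def GammaMinus {Γ A : Type} [DecidableEq A] (I : Γ → Γ → Prop)
    (η : TraceMonoid I →* QueueMonoid A) (a : Γ) : Prop :=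
  ∃ w : List (A ⊕ A),
    (queueCon A).mk' (FreeMonoid.ofList w) = η ((traceCon I).mk' (FreeMonoid.of a)) ∧
    ppr w = [] ∧ npr w ≠ []

/-- `a ∈ Γ±`: some representative of `η(a)` has both projections nonempty. -/
def GammaPM {Γ A : Type} [DecidableEq A] (I : Γ → Γ → Prop)
    (η : TraceMonoid I →* QueueMonoid A) (a : Γ) : Prop :=
  ∃ w : List (A ⊕ A),
    (queueCon A).mk' (FreeMonoid.ofList w) = η ((traceCon I).mk' (FreeMonoid.of a)) ∧
    ppr w ≠ [] ∧ npr w ≠ []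

/-!
Suppose `a` were independent of distinct letters `b` and `c`, and let `u`, `v`, `w` represent the
images of `a`, `b`, `c`. A queue action is determined by its two projections and its demand, the
least length of a queue on which it is defined. Since `u` commutes with `v` and `w`, so do their
projections, and words commuting with a nonempty word are determined by their length. A
nontrivial integer solution of the two resulting length equations gives traces
`b^n₀ c^n₁ a^n₂ ≠ b^m₀ c^m₁ a^m₂` whose images have equal projections; padding them with powers
of themselves also equalises the demands, contradicting injectivity.
-/

open Matrix in
theorem exists_ne_dotProduct_eq (x y : Fin 3 → ℕ) :
    ∃ p q : Fin 3 → ℕ, p ≠ q ∧ x ⬝ᵥ p = x ⬝ᵥ q ∧ y ⬝ᵥ p = y ⬝ᵥ q := by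
  let M : Matrix (Fin 3) (Fin 3) ℤ := ![Nat.cast ∘ x, Nat.cast ∘ y, 0]
  obtain ⟨v, hv, hMv⟩ :=
    exists_mulVec_eq_zero_iff.2 (det_eq_zero_of_row_eq_zero (A := M) 2 fun _ => rfl)
  have hsplit : ∀ z : Fin 3 → ℕ, ((z ⬝ᵥ fun i => (v i).toNat : ℕ) : ℤ) -
      (z ⬝ᵥ fun i => (-v i).toNat : ℕ) = (Nat.cast ∘ z) ⬝ᵥ v := by
    intro z
    simp only [dotProduct, Nat.cast_sum, Nat.cast_mul, ← Finset.sum_sub_distrib, ← mul_sub,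
      Int.toNat_sub_toNat_neg, Function.comp]
  refine ⟨fun i => (v i).toNat, fun i => (-v i).toNat, fun h => hv (funext fun i => ?_), ?_, ?_⟩
  · have := congrFun h i
    simp only [Pi.zero_apply] at this ⊢
    omega
  · have h0 : (Nat.cast ∘ x) ⬝ᵥ v = 0 := congrFun hMv 0
    have := hsplit x
    omega
  · have h0 : (Nat.cast ∘ y) ⬝ᵥ v = 0 := congrFun hMv 1
    have := hsplit y
    omega

lemma eq_of_pow_succ_mul_pow_eq {M : Type*} [CancelCommMonoid M] {x y : M} {i j : ℕ}
    (h : x ^ (i + 1) * y ^ j = x ^ i * y ^ (j + 1)) : x = y := by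
  rw [pow_succ, pow_succ, mul_right_comm, ← mul_assoc] at h
  exact mul_left_cancel h

namespace FreeMonoid

variable {α : Type*}

lemma length_pow (x : FreeMonoid α) (n : ℕ) : (x ^ n).length = n * x.length := by
  induction n with
  | zero => simp [length_one]
  | succ n ih => rw [pow_succ, length_mul, ih, Nat.succ_mul]

/-- A word commuting with a nonempty `p` is a prefix of a power of `p`, so it is determined
by its length. -/
theorem eq_of_commute_of_length_eq {p x y : FreeMonoid α} (hp : p ≠ 1) (hx : Commute x p)
    (hy : Commute y p) (h : x.length = y.length) : x = y := by
  have hprefix : ∀ z : FreeMonoid α, Commute z p →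
      z.toList = (p ^ z.length).toList.take z.length := by
    intro z hz
    have hle : z.length ≤ (p ^ z.length).length := by
      rw [length_pow]
      exact Nat.le_mul_of_pos_right _ (Nat.pos_of_ne_zero (mt length_eq_zero.1 hp))
    calc z.toList = (z * p ^ z.length).toList.take z.length := List.take_left.symm
      _ = (p ^ z.length * z).toList.take z.length := by rw [(hz.pow_right _).eq]
      _ = (p ^ z.length).toList.take z.length := List.take_append_of_le_length hle
  exact toList.injective (by rw [hprefix x hx, hprefix y hy, h])

theorem pow_mul_pow_mul_pow_eq_of_commute {p x y : FreeMonoid α} (hp : p ≠ 1)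
    (hx : Commute x p) (hy : Commute y p) {n m : Fin 3 → ℕ}
    (h : ![x.length, y.length, p.length] ⬝ᵥ n = ![x.length, y.length, p.length] ⬝ᵥ m) :
    x ^ n 0 * y ^ n 1 * p ^ n 2 = x ^ m 0 * y ^ m 1 * p ^ m 2 := by
  have hcomm : ∀ k : Fin 3 → ℕ, Commute (x ^ k 0 * y ^ k 1 * p ^ k 2) p := fun k =>
    ((hx.pow_left _).mul_left (hy.pow_left _)).mul_left ((Commute.refl p).pow_left _)
  refine eq_of_commute_of_length_eq hp (hcomm n) (hcomm m) ?_
  simp only [dotProduct, Fin.sum_univ_three, Matrix.cons_val_zero, Matrix.cons_val_one,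
    Matrix.cons_val] at h
  simp only [length_mul, length_pow]
  linarith

end FreeMonoid

namespace QueueAction

variable {A : Type}

def posProj : FreeMonoid (A ⊕ A) →* FreeMonoid A where
  toFun x := FreeMonoid.ofList (ppr x.toList)
  map_one' := rfl
  map_mul' _ _ := List.filterMap_append

def negProj : FreeMonoid (A ⊕ A) →* FreeMonoid A where
  toFun x := FreeMonoid.ofList (npr x.toList)
  map_one' := rfl
  map_mul' _ _ := List.filterMap_append

@[simp] lemma posProj_of_inl (a : A) : posProj (FreeMonoid.of (Sum.inl a)) = FreeMonoid.of a := rfl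
@[simp] lemma posProj_of_inr (a : A) : posProj (FreeMonoid.of (Sum.inr a)) = 1 := rfl
@[simp] lemma negProj_of_inl (a : A) : negProj (FreeMonoid.of (Sum.inl a)) = 1 := rfl
@[simp] lemma negProj_of_inr (a : A) : negProj (FreeMonoid.of (Sum.inr a)) = FreeMonoid.of a := rfl

def readExcess (x : FreeMonoid (A ⊕ A)) : ℤ := (negProj x).length - (posProj x).length

@[simp] lemma readExcess_of_inl (a : A) : readExcess (FreeMonoid.of (Sum.inl a)) = -1 := rfl
@[simp] lemma readExcess_of_inr (a : A) : readExcess (FreeMonoid.of (Sum.inr a)) = 1 := rfl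

lemma readExcess_mul (x y : FreeMonoid (A ⊕ A)) :
    readExcess (x * y) = readExcess x + readExcess y := by
  simp only [readExcess, map_mul, FreeMonoid.length_mul]
  push_cast
  ring

lemma readExcess_pow (x : FreeMonoid (A ⊕ A)) (n : ℕ) :
    readExcess (x ^ n) = n * readExcess x := by
  induction n with
  | zero => simp [readExcess]
  | succ n ih => rw [pow_succ, readExcess_mul, ih]; push_cast; ring

/-- The largest read excess of a prefix of `x`; by `qact_some` it is the least length of a
queue on which `x` is defined. -/
def demand (x : FreeMonoid (A ⊕ A)) : ℤ :=
  x.toList.foldr (fun y d => max 0 (readExcess (FreeMonoid.of y) + d)) 0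

@[simp] lemma demand_one : demand (1 : FreeMonoid (A ⊕ A)) = 0 := rfl

lemma demand_of_mul (y : A ⊕ A) (x : FreeMonoid (A ⊕ A)) :
    demand (FreeMonoid.of y * x) = max 0 (readExcess (FreeMonoid.of y) + demand x) := rfl

lemma demand_nonneg (x : FreeMonoid (A ⊕ A)) : 0 ≤ demand x := by
  induction x using FreeMonoid.inductionOn' with
  | one => rfl
  | of_mul y x _ => exact le_max_left _ _

lemma demand_mul (x y : FreeMonoid (A ⊕ A)) :
    demand (x * y) = max (demand x) (readExcess x + demand y) := by
  induction x using FreeMonoid.inductionOn' with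
  | one => simp [readExcess, demand_nonneg]
  | of_mul z x ih =>
    rw [mul_assoc, demand_of_mul, demand_of_mul, ih, readExcess_mul, ← max_add_add_left,
      ← max_assoc, add_assoc]

lemma readExcess_le_demand (x : FreeMonoid (A ⊕ A)) : readExcess x ≤ demand x := by
  simpa [demand_nonneg] using (demand_mul x 1).ge

lemma demand_le_length_negProj (x : FreeMonoid (A ⊕ A)) : demand x ≤ (negProj x).length := by
  induction x using FreeMonoid.inductionOn' with
  | one => rfl
  | of_mul y x ih =>
    rw [demand_of_mul, map_mul, FreeMonoid.length_mul]
    cases y <;>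
      simp only [negProj_of_inl, negProj_of_inr, readExcess_of_inl, readExcess_of_inr,
        FreeMonoid.length_one, FreeMonoid.length_of] <;> omega

lemma demand_mul_of_readExcess_add_le {x y : FreeMonoid (A ⊕ A)}
    (h : readExcess x + (negProj y).length ≤ 0) : demand (x * y) = demand x := by
  have := demand_le_length_negProj y
  have := demand_nonneg x
  rw [demand_mul]
  exact max_eq_left (by linarith)

lemma demand_mul_of_length_le_readExcess {x y : FreeMonoid (A ⊕ A)}
    (h : (negProj x).length + (posProj x).length ≤ readExcess y) :
    demand (x * y) = readExcess x + demand y := by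
  have := demand_le_length_negProj x
  have := readExcess_le_demand y
  rw [demand_mul]
  exact max_eq_right (by simp only [readExcess] at *; linarith)

variable [DecidableEq A]

@[simp] lemma qact_none (l : List (A ⊕ A)) : qact A none l = none := by
  induction l with
  | nil => rfl
  | cons y l ih => exact ih

lemma qact_some (x : FreeMonoid (A ⊕ A)) (q : List A) :
    qact A (some q) x.toList =
      if (negProj x).toList <+: q ++ (posProj x).toList ∧ demand x ≤ q.length then
        some ((q ++ (posProj x).toList).drop (negProj x).length)
      else none := by
  induction x using FreeMonoid.inductionOn' generalizing q with
  | one => simp [qact]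
  | of_mul y x ih =>
    change qact A (qstep A (some q) y) x.toList = _
    rw [demand_of_mul]
    rcases y with a | a
    · rw [qstep, ih]
      refine if_congr ?_ (by simp) rfl
      simp only [map_mul, negProj_of_inl, posProj_of_inl, one_mul, FreeMonoid.toList_mul,
        FreeMonoid.toList_of, List.append_assoc, List.singleton_append, readExcess_of_inl,
        List.length_append, List.length_singleton, Nat.cast_add, Nat.cast_one]
      exact and_congr_right' (by omega)
    · rcases q with _ | ⟨b, q⟩
      · have := demand_nonneg x
        rw [if_neg fun h => by simp only [readExcess_of_inr, List.length_nil] at h; omega, qstep,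
          qact_none]
      by_cases hb : b = a
      · subst hb
        rw [qstep, if_pos rfl, ih]
        refine if_congr ?_ (by simp [add_comm 1]) rfl
        simp only [map_mul, negProj_of_inr, posProj_of_inr, FreeMonoid.toList_mul,
          FreeMonoid.toList_of, List.cons_append, List.cons_prefix_cons,
          true_and, readExcess_of_inr, List.length_cons, Nat.cast_add, Nat.cast_one]
        exact and_congr_right' (by omega)
      · rw [if_neg (by simp [Ne.symm hb]), qstep, if_neg hb, qact_none]

theorem rel_of_proj_eq_of_demand_eq {x y : FreeMonoid (A ⊕ A)} (hpos : posProj x = posProj y)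
    (hneg : negProj x = negProj y) (hdem : demand x = demand y) : queueCon A x y := by
  rintro (_ | q)
  · simp
  · rw [qact_some, qact_some, hpos, hneg, hdem]

lemma qact_negProj (x : FreeMonoid (A ⊕ A)) :
    qact A (some (negProj x).toList) x.toList = some (posProj x).toList := by
  rw [qact_some, if_pos ⟨List.prefix_append _ _, demand_le_length_negProj x⟩, List.drop_left']
  rfl

/-- Equivalent actions reading equally many letters read and write the same words: run both on
the queue holding exactly what the first one reads. -/
theorem proj_eq_of_rel {x y : FreeMonoid (A ⊕ A)} (h : queueCon A x y)
    (hlen : (negProj x).length = (negProj y).length) :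
    posProj x = posProj y ∧ negProj x = negProj y := by
  have hrun := h (some (negProj x).toList)
  rw [qact_negProj, qact_some] at hrun
  split_ifs at hrun with hcond
  · rw [List.drop_left' hlen, Option.some_inj] at hrun
    refine ⟨FreeMonoid.toList.injective hrun, FreeMonoid.toList.injective ?_⟩
    rw [List.prefix_iff_eq_take.1 hcond.1]
    exact (List.take_left' hlen).symm

theorem commute_proj_of_rel_mul_comm {x y : FreeMonoid (A ⊕ A)} (h : queueCon A (x * y) (y * x)) :
    Commute (posProj x) (posProj y) ∧ Commute (negProj x) (negProj y) := by
  have hlen : (negProj (x * y)).length = (negProj (y * x)).length := by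
    simp only [map_mul, FreeMonoid.length_mul, add_comm]
  obtain ⟨hpos, hneg⟩ := proj_eq_of_rel h hlen
  rw [map_mul, map_mul] at hpos hneg
  exact ⟨hpos, hneg⟩

/-- Two actions with the same projections become equivalent after padding with powers of
themselves: a long prefix or suffix dominates the demand, according to the sign of the read
excess. -/
theorem exists_rel_pow_mul_pow {s t : FreeMonoid (A ⊕ A)} (hpos : posProj s = posProj t)
    (hneg : negProj s = negProj t) :
    ∃ i j : ℕ, queueCon A (s ^ (i + 1) * t ^ j) (s ^ i * t ^ (j + 1)) := by
  suffices ∃ i j : ℕ, demand (s ^ (i + 1) * t ^ j) = demand (s ^ i * t ^ (j + 1)) by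
    obtain ⟨i, j, h⟩ := this
    have hproj : ∀ f : FreeMonoid (A ⊕ A) →* FreeMonoid A, f s = f t →
        f (s ^ (i + 1) * t ^ j) = f (s ^ i * t ^ (j + 1)) := by
      intro f hf
      rw [map_mul, map_mul, map_pow, map_pow, map_pow, map_pow, hf, ← pow_add, ← pow_add]
      congr 1
      omega
    exact ⟨i, j, rel_of_proj_eq_of_demand_eq (hproj _ hpos) (hproj _ hneg) h⟩
  have hre : readExcess t = readExcess s := by simp only [readExcess, hpos, hneg]
  rcases lt_trichotomy (readExcess s) 0 with hlt | heq | hgt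
  · have hbound : readExcess (s ^ (2 * (negProj s).length)) + 2 * (negProj s).length ≤ 0 := by
      rw [readExcess_pow]; push_cast; nlinarith
    refine ⟨2 * (negProj s).length, 1, ?_⟩
    rw [pow_succ, pow_one, pow_two, mul_assoc, demand_mul_of_readExcess_add_le,
      demand_mul_of_readExcess_add_le] <;>
    · simp only [map_mul, FreeMonoid.length_mul, ← hneg]; push_cast; linarith
  · refine ⟨1, 1, ?_⟩
    simp only [Nat.reduceAdd, pow_two, pow_one, demand_mul, readExcess_mul, hre, heq, zero_add]
    omega
  · have hbound : 2 * ((negProj s).length + (posProj s).length : ℤ) ≤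
        readExcess (t ^ (2 * ((negProj s).length + (posProj s).length))) := by
      rw [readExcess_pow, hre]; push_cast; nlinarith
    refine ⟨1, 2 * ((negProj s).length + (posProj s).length), ?_⟩
    rw [pow_two, pow_one, pow_succ', ← mul_assoc, demand_mul_of_length_le_readExcess,
      demand_mul_of_length_le_readExcess, readExcess_mul, readExcess_mul, hre] <;>
    · simp only [map_mul, FreeMonoid.length_mul, ← hneg, ← hpos]; push_cast; linarith

theorem exists_ne_proj_eq {u v w : FreeMonoid (A ⊕ A)} (hpos : posProj u ≠ 1)
    (hneg : negProj u ≠ 1) (hv : queueCon A (u * v) (v * u)) (hw : queueCon A (u * w) (w * u)) :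
    ∃ n m : Fin 3 → ℕ, n ≠ m ∧
      posProj (v ^ n 0 * w ^ n 1 * u ^ n 2) = posProj (v ^ m 0 * w ^ m 1 * u ^ m 2) ∧
      negProj (v ^ n 0 * w ^ n 1 * u ^ n 2) = negProj (v ^ m 0 * w ^ m 1 * u ^ m 2) := by
  obtain ⟨hposv, hnegv⟩ := commute_proj_of_rel_mul_comm hv
  obtain ⟨hposw, hnegw⟩ := commute_proj_of_rel_mul_comm hw
  obtain ⟨n, m, hnm, hlpos, hlneg⟩ := exists_ne_dotProduct_eq
    ![(posProj v).length, (posProj w).length, (posProj u).length]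
    ![(negProj v).length, (negProj w).length, (negProj u).length]
  refine ⟨n, m, hnm, ?_, ?_⟩ <;> simp only [map_mul, map_pow]
  · exact FreeMonoid.pow_mul_pow_mul_pow_eq_of_commute hpos hposv.symm hposw.symm hlpos
  · exact FreeMonoid.pow_mul_pow_mul_pow_eq_of_commute hneg hnegv.symm hnegw.symm hlneg

end QueueAction

open QueueAction

section Embedding

variable {Γ A : Type} [DecidableEq A] {I : Γ → Γ → Prop}

lemma count_eq_of_traceCon [DecidableEq Γ] (g : Γ) {x y : FreeMonoid Γ} (h : traceCon I x y) :
    FreeMonoid.count g x = FreeMonoid.count g y := by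
  refine (Con.conGen_le (c := Con.ker (FreeMonoid.count g))).2 ?_ h
  rintro _ _ ⟨a, b, -, rfl, rfl⟩
  exact (map_mul _ _ _).trans ((mul_comm _ _).trans (map_mul _ _ _).symm)

variable (η : TraceMonoid I →* QueueMonoid A)

lemma rel_mul_comm_of_indep {g h : Γ} (hgh : I g h) {x y : FreeMonoid (A ⊕ A)}
    (hx : (queueCon A).mk' x = η ((traceCon I).mk' (FreeMonoid.of g)))
    (hy : (queueCon A).mk' y = η ((traceCon I).mk' (FreeMonoid.of h))) :
    queueCon A (x * y) (y * x) := by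
  have htr : (traceCon I) (FreeMonoid.of g * FreeMonoid.of h) (FreeMonoid.of h * FreeMonoid.of g) :=
    ConGen.Rel.of _ _ ⟨g, h, hgh, rfl, rfl⟩
  refine (Con.eq _).1 (?_ : (queueCon A).mk' _ = (queueCon A).mk' _)
  rw [map_mul, map_mul, hx, hy, ← map_mul η, ← map_mul η, ← map_mul, ← map_mul]
  exact congrArg η ((Con.eq _).2 htr)

theorem count_eq_of_proj_eq [DecidableEq Γ] (hη : Function.Injective η) {T T' : FreeMonoid Γ}
    {s t : FreeMonoid (A ⊕ A)} (hs : (queueCon A).mk' s = η ((traceCon I).mk' T))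
    (ht : (queueCon A).mk' t = η ((traceCon I).mk' T')) (hpos : posProj s = posProj t)
    (hneg : negProj s = negProj t) (g : Γ) : FreeMonoid.count g T = FreeMonoid.count g T' := by
  obtain ⟨i, j, hij⟩ := exists_rel_pow_mul_pow hpos hneg
  have hq : (queueCon A).mk' (s ^ (i + 1) * t ^ j) = (queueCon A).mk' (s ^ i * t ^ (j + 1)) :=
    (Con.eq _).2 hij
  have hT : (traceCon I) (T ^ (i + 1) * T' ^ j) (T ^ i * T' ^ (j + 1)) := by
    refine (Con.eq _).1 (hη (?_ : η ((traceCon I).mk' _) = η ((traceCon I).mk' _)))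
    simpa only [map_mul, map_pow, hs, ht] using hq
  exact eq_of_pow_succ_mul_pow_eq (by simpa only [map_mul, map_pow] using count_eq_of_traceCon g hT)

end Embedding

theorem stmt15_general (Γ A : Type) [DecidableEq A] (I : Γ → Γ → Prop)
    (hirr : ∀ a, ¬ I a a)
    (η : TraceMonoid I →* QueueMonoid A) (hη : Function.Injective η)
    (a : Γ) (ha : GammaPM I η a) :
    ∀ b c : Γ, I a b → I a c → b = c := by
  intro b c hab hac
  by_contra hbc
  classical
  have hne (d : Γ) (had : I a d) : a ≠ d := fun h => hirr a (h ▸ had)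
  obtain ⟨u, hu, hpos, hneg⟩ := ha
  obtain ⟨v, hv⟩ := (queueCon A).mk'_surjective (η ((traceCon I).mk' (FreeMonoid.of b)))
  obtain ⟨w, hw⟩ := (queueCon A).mk'_surjective (η ((traceCon I).mk' (FreeMonoid.of c)))
  obtain ⟨n, m, hnm, hposEq, hnegEq⟩ := exists_ne_proj_eq
    (fun h => hpos (congrArg FreeMonoid.toList h)) (fun h => hneg (congrArg FreeMonoid.toList h))
    (rel_mul_comm_of_indep η hab hu hv) (rel_mul_comm_of_indep η hac hu hw)
  have himage (k : Fin 3 → ℕ) : (queueCon A).mk' (v ^ k 0 * w ^ k 1 * .ofList u ^ k 2) =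
      η ((traceCon I).mk' (.of b ^ k 0 * .of c ^ k 1 * .of a ^ k 2)) := by
    simp only [map_mul, map_pow, hu, hv, hw]
  have hcount := count_eq_of_proj_eq η hη (himage n) (himage m) hposEq hnegEq
  refine hnm (funext fun i => ?_)
  fin_cases i
  · simpa [FreeMonoid.count_of, Pi.mulSingle_apply, hbc, hne b hab] using hcount b
  · simpa [FreeMonoid.count_of, Pi.mulSingle_apply, Ne.symm hbc, hne c hac] using hcount c
  · simpa [FreeMonoid.count_of, Pi.mulSingle_apply, hne b hab, hne c hac] using hcount a

/-- If `η` embeds the trace monoid into the queue monoid and both projections of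
`η(a)` are nonempty, then `a` has degree at most 1 in `(Γ, I)`. -/
theorem stmt15 (Γ A : Type) [DecidableEq A] (I : Γ → Γ → Prop)
    (hirr : ∀ a, ¬ I a a) (hsym : ∀ a b, I a b → I b a)
    (η : TraceMonoid I →* QueueMonoid A) (hη : Function.Injective η)
    (a : Γ) (ha : GammaPM I η a) :
    ∀ b c : Γ, I a b → I a c → b = c :=
  stmt15_general Γ A I hirr η hη a ha
end

section
/- Let (Γ, I) be an independence alphabet such that either (a) every vertex of (Γ, I) has degree at most 1, or (b) (Γ, I) has exactly one nontrivial connected component and that component is complete bipartite. Then the trace monoid M(Γ, I) embeds into {a,b}* × {c,d}*. -/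
/-- `(Γ, I)` has exactly one nontrivial connected component and it is complete
bipartite: the edge set is exactly `C₁ × C₂ ∪ C₂ × C₁` for disjoint nonempty sets
`C₁, C₂`. -/
def OneCompleteBipartiteComponent {Γ : Type} (I : Γ → Γ → Prop) : Prop :=
  ∃ C₁ C₂ : Set Γ, Disjoint C₁ C₂ ∧ C₁.Nonempty ∧ C₂.Nonempty ∧
    ∀ a b : Γ, I a b ↔ ((a ∈ C₁ ∧ b ∈ C₂) ∨ (a ∈ C₂ ∧ b ∈ C₁))

/-! Both cases rest on one injectivity criterion. Call a morphism `φ` on `Γ*` that respects the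
commutations head-reflecting if `φ v = φ (a u)` forces `v ≡ a v'` for some `v'`. Into a
left-cancellative monoid such a `φ` is injective on traces: peel off `a`, cancel `φ a` and recurse
on `u` and `v'` (the empty word is covered because traces preserve length).

For a complete bipartite `I` with parts `C, D`, take the two projections erasing `D`, resp. `C`.
If `a ∉ D`, the first letter of `v` outside `D` is `a`; the letters before it lie in `D`, so they
commute with `a` when `a ∈ C`, and otherwise there are none, as the `C`-erasure of `v` starts
with `a`.

If every vertex has degree at most one, the classes `{x} ∪ I x` have at most two letters. Send
every letter to its class, with multiplicity 1 in the first coordinate, and in the second with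
multiplicity 2 for a chosen representative of each class and 1 for the other letter. The leading
runs of the class of `a` in the two images then determine the length of the leading block of that
class and the number of representatives in it, so `a` also occurs in the leading block of `v` and
commutes to the front.

A countable alphabet is finally coded into `{0,1}*` by `n ↦ 1ⁿ0`. -/

open FreeMonoid

namespace List

variable {α : Type*}

theorem replicate_append_cancel {c : α} :
    ∀ {m n : ℕ} {X Y : List α}, X.head? ≠ some c → Y.head? ≠ some c →
      replicate m c ++ X = replicate n c ++ Y → m = n ∧ X = Y
  | 0, 0, _, _, _, _, h => ⟨rfl, h⟩
  | 0, _ + 1, _, _, hX, _, h => by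
    simp only [replicate_zero, replicate_succ, nil_append, cons_append] at h
    simp [h] at hX
  | _ + 1, 0, _, _, _, hY, h => by
    simp only [replicate_zero, replicate_succ, nil_append, cons_append] at h
    simp [← h] at hY
  | _ + 1, _ + 1, _, _, hX, hY, h => by
    obtain ⟨rfl, rfl⟩ := replicate_append_cancel hX hY (cons_injective h)
    exact ⟨rfl, rfl⟩

end List

namespace FreeMonoid

variable {α : Type*}

theorem toList_of_pow (a : α) (k : ℕ) :
    toList (of a ^ k) = List.replicate k a := by
  induction k with
  | zero => rfl
  | succ k ih => rw [pow_succ, toList_mul, ih, toList_of, List.replicate_succ']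

def unaryCode : FreeMonoid ℕ →* FreeMonoid Bool :=
  lift fun n => ofList (List.replicate n true ++ [false])

theorem unaryCode_injective : Function.Injective unaryCode := by
  intro x
  induction x using FreeMonoid.inductionOn' with
  | one =>
    intro y h
    cases y using FreeMonoid.casesOn with
    | one => rfl
    | of_mul n y => exact absurd (congrArg length h) (by simp [unaryCode]; omega)
  | of_mul m x ih =>
    intro y h
    cases y using FreeMonoid.casesOn with
    | one => simp [unaryCode] at h
    | of_mul n y =>
      have h' := congrArg toList h
      simp only [map_mul, unaryCode, lift_eval_of, toList_mul, toList_ofList,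
        List.append_assoc, List.cons_append, List.nil_append] at h'
      obtain ⟨rfl, hxy⟩ := List.replicate_append_cancel (by simp) (by simp) h'
      rw [ih (List.cons_injective hxy)]

theorem exists_injective_bool (β : Type*) [Countable β] :
    ∃ f : FreeMonoid β →* FreeMonoid Bool, Function.Injective f := by
  obtain ⟨e, he⟩ := Countable.exists_injective_nat β
  refine ⟨unaryCode.comp (map e), unaryCode_injective.comp fun x y h => ?_⟩
  exact toList.injective (List.map_injective_iff.2 he (congrArg toList h))

def filterHom (p : α → Prop) [DecidablePred p] : FreeMonoid α →* FreeMonoid α where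
  toFun w := ofList (w.toList.filter p)
  map_one' := rfl
  map_mul' _ _ := List.filter_append _ _

@[simp]
theorem toList_filterHom (p : α → Prop) [DecidablePred p] (w : FreeMonoid α) :
    toList (filterHom p w) = w.toList.filter p := rfl

theorem filterHom_of_of_not {p : α → Prop} [DecidablePred p] {a : α} (ha : ¬ p a) :
    filterHom p (of a) = 1 :=
  toList.injective (by simp [ha])

end FreeMonoid

section Trace

variable {Γ : Type} {I : Γ → Γ → Prop} {M : Type*} [Monoid M]

theorem traceCon_le_ker (φ : FreeMonoid Γ →* M)
    (hφ : ∀ a b, I a b → Commute (φ (of a)) (φ (of b))) : traceCon I ≤ Con.ker φ :=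
  Con.conGen_le.2 fun _ _ ⟨a, b, hab, hu, hv⟩ => by
    rw [Con.ker_apply, hu, hv, map_mul, map_mul]
    exact hφ a b hab

theorem traceCon.length_eq {u v : FreeMonoid Γ} (h : traceCon I u v) : u.length = v.length := by
  have hker := traceCon_le_ker (I := I) (map fun _ => ()) (fun _ _ _ => Commute.refl _) h
  simpa [length, toList_map] using congrArg length hker

theorem traceCon_mul_of_comm {a : Γ} {p : FreeMonoid Γ} (hp : ∀ x ∈ p, x = a ∨ I x a) :
    traceCon I (p * of a) (of a * p) := by
  induction p using FreeMonoid.inductionOn' with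
  | one => simpa using (traceCon I).refl (of a)
  | of_mul x p ih =>
    have hxa : traceCon I (of x * of a) (of a * of x) := by
      rcases hp x (mem_mul.2 (Or.inl mem_of_self)) with rfl | hxa
      · exact (traceCon I).refl _
      · exact ConGen.Rel.of _ _ ⟨x, a, hxa, rfl, rfl⟩
    have hpa := ih fun y hy => hp y (mem_mul.2 (Or.inr hy))
    have h₁ : traceCon I (of x * (p * of a)) (of x * (of a * p)) :=
      (traceCon I).mul ((traceCon I).refl _) hpa
    have h₂ : traceCon I (of x * of a * p) (of a * of x * p) :=
      (traceCon I).mul hxa ((traceCon I).refl _)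
    simp only [mul_assoc] at h₁ h₂ ⊢
    exact (traceCon I).trans h₁ h₂

def ReflectsHeads (I : Γ → Γ → Prop) (φ : FreeMonoid Γ →* M) : Prop :=
  ∀ a u v, φ (of a * u) = φ v → ∃ v', traceCon I v (of a * v')

theorem ReflectsHeads.traceCon_of_eq [IsLeftCancelMul M] {φ : FreeMonoid Γ →* M}
    (hφ : traceCon I ≤ Con.ker φ) (hhead : ReflectsHeads I φ) :
    ∀ {u v : FreeMonoid Γ}, φ u = φ v → traceCon I u v := by
  intro u
  induction u using FreeMonoid.inductionOn' with
  | one =>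
    intro v h
    cases v using FreeMonoid.casesOn with
    | one => exact (traceCon I).refl 1
    | of_mul b v =>
      obtain ⟨u', hu'⟩ := hhead b v 1 h.symm
      exact absurd (traceCon.length_eq hu') (by simp [length_mul]; omega)
  | of_mul a u ih =>
    intro v h
    obtain ⟨v', hv⟩ := hhead a u v h
    have hφv : φ (of a) * φ u = φ (of a) * φ v' := by
      rw [← map_mul, ← map_mul, h]
      exact hφ hv
    exact (traceCon I).trans ((traceCon I).mul ((traceCon I).refl _) (ih (mul_left_cancel hφv)))
      ((traceCon I).symm hv)

theorem ReflectsHeads.exists_injective [IsLeftCancelMul M] {φ : FreeMonoid Γ →* M}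
    (hφ : traceCon I ≤ Con.ker φ) (hhead : ReflectsHeads I φ) :
    ∃ f : TraceMonoid I →* M, Function.Injective f :=
  ⟨(traceCon I).lift φ hφ, fun x y => Con.induction_on₂ x y fun _ _ h =>
    (Con.eq _).2 (hhead.traceCon_of_eq hφ h)⟩

theorem exists_injective_of_reflectsHeads {β : Type*} [Countable β]
    {S T : FreeMonoid Γ →* FreeMonoid β}
    (hS : ∀ a b, I a b → Commute (S (of a)) (S (of b)))
    (hT : ∀ a b, I a b → Commute (T (of a)) (T (of b))) (hhead : ReflectsHeads I (S.prod T)) :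
    ∃ f : TraceMonoid I →* FreeMonoid Bool × FreeMonoid Bool, Function.Injective f := by
  obtain ⟨g, hg⟩ := hhead.exists_injective <|
    traceCon_le_ker _ fun a b hab => Prod.commute_iff.2 ⟨hS a b hab, hT a b hab⟩
  obtain ⟨e, he⟩ := FreeMonoid.exists_injective_bool β
  exact ⟨(e.prodMap e).comp g, (he.prodMap he).comp hg⟩

end Trace

section Bipartite

open scoped Classical

variable {Γ : Type} {I : Γ → Γ → Prop} {C D : Set Γ}

theorem exists_traceCon_of_filterHom_eq (hCD : Disjoint C D) (hI : ∀ x ∈ D, ∀ a ∈ C, I x a)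
    {a : Γ} (ha : a ∉ D) {u v : FreeMonoid Γ}
    (hD : filterHom (· ∉ D) (of a * u) = filterHom (· ∉ D) v)
    (hC : filterHom (· ∉ C) (of a * u) = filterHom (· ∉ C) v) :
    ∃ v', traceCon I v (of a * v') := by
  have hD' : (toList v).filter (· ∉ D) = a :: (toList u).filter (· ∉ D) := by
    simpa [ha] using (congrArg toList hD).symm
  obtain ⟨p, q, hv, hpD, -, -⟩ := List.filter_eq_cons_iff.1 hD'
  replace hpD : ∀ x ∈ p, x ∈ D := by simpa using hpD
  replace hv : v = ofList p * (of a * ofList q) := toList.injective hv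
  by_cases haC : a ∈ C
  · refine ⟨ofList p * ofList q, ?_⟩
    have hmove := traceCon_mul_of_comm (I := I) (a := a) (p := ofList p)
      fun x hx => Or.inr (hI x (hpD x hx) a haC)
    rw [hv, ← mul_assoc, ← mul_assoc]
    exact (traceCon I).mul hmove ((traceCon I).refl _)
  · obtain rfl : p = [] := by
      cases p with
      | nil => rfl
      | cons x p =>
        have hx : x ∉ C := Set.disjoint_right.1 hCD (hpD x List.mem_cons_self)
        have hxa : a = x := by
          simpa [hv, haC, hx] using congrArg (fun w => (toList w).head?) hC
        exact absurd (hxa ▸ hpD x List.mem_cons_self) ha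
    exact ⟨ofList q, by rw [hv]; exact (traceCon I).refl _⟩

theorem OneCompleteBipartiteComponent.exists_injective [Countable Γ]
    (h : OneCompleteBipartiteComponent I) :
    ∃ f : TraceMonoid I →* FreeMonoid Bool × FreeMonoid Bool, Function.Injective f := by
  obtain ⟨C, D, hCD, -, -, hI⟩ := h
  refine exists_injective_of_reflectsHeads (S := filterHom (· ∉ D)) (T := filterHom (· ∉ C))
    (fun a b hab => ?_) (fun a b hab => ?_) ?_
  · rcases (hI a b).1 hab with ⟨-, hb⟩ | ⟨ha, -⟩
    · rw [filterHom_of_of_not (p := (· ∉ D)) (not_not.2 hb)]; exact .one_right _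
    · rw [filterHom_of_of_not (p := (· ∉ D)) (not_not.2 ha)]; exact .one_left _
  · rcases (hI a b).1 hab with ⟨ha, -⟩ | ⟨-, hb⟩
    · rw [filterHom_of_of_not (p := (· ∉ C)) (not_not.2 ha)]; exact .one_left _
    · rw [filterHom_of_of_not (p := (· ∉ C)) (not_not.2 hb)]; exact .one_right _
  · intro a u v huv
    obtain ⟨hD, hC⟩ := Prod.ext_iff.1 huv
    by_cases haD : a ∈ D
    · exact exists_traceCon_of_filterHom_eq hCD.symm
        (fun x hx b hb => (hI x b).2 (Or.inl ⟨hx, hb⟩))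
        (Set.disjoint_right.1 hCD haD) hC hD
    · exact exists_traceCon_of_filterHom_eq hCD
        (fun x hx b hb => (hI x b).2 (Or.inr ⟨hx, hb⟩)) haD hD hC

end Bipartite

section ClassPow

open scoped Classical

variable {Γ : Type} {I : Γ → Γ → Prop} (s : Setoid Γ)

def classPowHom (n : Γ → ℕ) : FreeMonoid Γ →* FreeMonoid (Quotient s) :=
  lift fun x => of (Quotient.mk s x) ^ n x

variable {s} {n : Γ → ℕ} {q : Quotient s}

theorem commute_classPowHom_of_rel {a b : Γ} (h : s a b) :
    Commute (classPowHom s n (of a)) (classPowHom s n (of b)) := by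
  simp only [classPowHom, lift_eval_of, Quotient.sound h]
  exact Commute.pow_pow_self _ _ _

theorem toList_classPowHom_of_forall_eq {B : List Γ} (hB : ∀ x ∈ B, Quotient.mk s x = q) :
    toList (classPowHom s n (ofList B)) = List.replicate (B.map n).sum q := by
  induction B with
  | nil => rfl
  | cons x B ih =>
    rw [ofList_cons, map_mul, toList_mul, ih fun y hy => hB y (List.mem_cons_of_mem _ hy),
      classPowHom, lift_eval_of, toList_of_pow, hB x List.mem_cons_self, List.map_cons,
      List.sum_cons, List.replicate_add]

theorem head?_toList_classPowHom_ne (hn : ∀ x, n x ≠ 0) {R : List Γ}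
    (hR : ∀ c ∈ R.head?, Quotient.mk s c ≠ q) :
    (toList (classPowHom s n (ofList R))).head? ≠ some q := by
  cases R with
  | nil => simp
  | cons c R =>
    obtain ⟨k, hk⟩ := Nat.exists_eq_succ_of_ne_zero (hn c)
    rw [ofList_cons, map_mul, toList_mul, classPowHom, lift_eval_of, toList_of_pow, hk,
      List.replicate_succ, List.cons_append, List.head?_cons]
    exact fun h => hR c rfl (Option.some_injective _ h)

theorem sum_map_takeWhile_eq_of_classPowHom_eq (hn : ∀ x, n x ≠ 0) {L L' : List Γ}
    (h : classPowHom s n (ofList L) = classPowHom s n (ofList L')) :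
    ((L.takeWhile (Quotient.mk s · = q)).map n).sum
      = ((L'.takeWhile (Quotient.mk s · = q)).map n).sum := by
  have hsplit : ∀ L : List Γ, toList (classPowHom s n (ofList L))
      = List.replicate ((L.takeWhile (Quotient.mk s · = q)).map n).sum q
        ++ toList (classPowHom s n (ofList (L.dropWhile (Quotient.mk s · = q)))) := by
    intro L
    conv_lhs => rw [← List.takeWhile_append_dropWhile (p := (Quotient.mk s · = q)) (l := L)]
    rw [ofList_append, map_mul, toList_mul, toList_classPowHom_of_forall_eq
      fun x hx => by simpa using List.mem_takeWhile_imp hx]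
  have hhead : ∀ L : List Γ,
      (toList (classPowHom s n (ofList (L.dropWhile (Quotient.mk s · = q))))).head? ≠ some q :=
    fun L => head?_toList_classPowHom_ne hn fun c hc => by
      have hc' := List.head?_dropWhile_not (Quotient.mk s · = q) L
      rw [Option.mem_def.1 hc] at hc'
      simpa using hc'
  have h' := congrArg toList h
  rw [hsplit L, hsplit L'] at h'
  exact (List.replicate_append_cancel (hhead L) (hhead L') h').1

noncomputable def repWeight (s : Setoid Γ) (x : Γ) : ℕ :=
  if x = (Quotient.mk s x).out then 2 else 1

theorem sum_map_repWeight {q : Quotient s} {B : List Γ} (hB : ∀ x ∈ B, Quotient.mk s x = q) :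
    (B.map (repWeight s)).sum = B.length + B.count q.out := by
  induction B with
  | nil => rfl
  | cons x B ih =>
    rw [List.map_cons, List.sum_cons, ih fun y hy => hB y (List.mem_cons_of_mem _ hy),
      List.length_cons, List.count_cons, repWeight, hB x List.mem_cons_self]
    rcases eq_or_ne x q.out with hx | hx
    · rw [if_pos hx, if_pos (beq_iff_eq.2 hx)]; omega
    · rw [if_neg hx, if_neg (by simpa using hx)]; omega

theorem mem_of_length_eq_of_count_out_eq
    (hpair : ∀ x y z, s x z → s y z → x = z ∨ y = z ∨ x = y) {a : Γ} {B B' : List Γ}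
    (hB' : ∀ x ∈ B', Quotient.mk s x = Quotient.mk s a) (hlen : B.length = B'.length)
    (hcount : B.count (Quotient.mk s a).out = B'.count (Quotient.mk s a).out) (ha : a ∈ B) :
    a ∈ B' := by
  set o := (Quotient.mk s a).out
  by_contra ha'
  by_cases hao : a = o
  · have hpos : 0 < B.count o := List.count_pos_iff.2 (hao ▸ ha)
    have hzero : B'.count o = 0 := List.count_eq_zero.2 (hao ▸ ha')
    omega
  · have hall : ∀ x ∈ B', o = x := by
      intro x hx
      rcases hpair x o a (Quotient.exact (hB' x hx)) (Quotient.mk_out a) with h | h | h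
      · exact absurd (h ▸ hx) ha'
      · exact absurd h.symm hao
      · exact h.symm
    have hfull : B.count o = B.length := by rw [hcount, List.count_eq_length.2 hall, hlen]
    exact hao (List.count_eq_length.1 hfull a ha).symm

theorem reflectsHeads_classPowHom (hI : ∀ x y, s x y → x = y ∨ I x y)
    (hpair : ∀ x y z, s x z → s y z → x = z ∨ y = z ∨ x = y) :
    ReflectsHeads I ((classPowHom s fun _ => 1).prod (classPowHom s (repWeight s))) := by
  intro a u v huv
  obtain ⟨h₁, h₂⟩ := Prod.ext_iff.1 huv
  have hlen := sum_map_takeWhile_eq_of_classPowHom_eq (q := Quotient.mk s a)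
    (L := a :: toList u) (L' := toList v) (fun _ => one_ne_zero) h₁
  have hcount := sum_map_takeWhile_eq_of_classPowHom_eq (q := Quotient.mk s a)
    (L := a :: toList u) (L' := toList v) (fun x => by unfold repWeight; split <;> simp) h₂
  set P : Γ → Bool := (Quotient.mk s · = Quotient.mk s a)
  have hclass : ∀ L : List Γ, ∀ x ∈ L.takeWhile P, Quotient.mk s x = Quotient.mk s a :=
    fun L x hx => by simpa [P] using List.mem_takeWhile_imp hx
  simp only [List.map_const', List.sum_replicate, smul_eq_mul, mul_one] at hlen
  rw [sum_map_repWeight (hclass _), sum_map_repWeight (hclass _), hlen] at hcount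
  have haB : a ∈ (a :: toList u).takeWhile P := by
    rw [List.takeWhile_cons_of_pos (by simp [P])]
    exact List.mem_cons_self
  obtain ⟨p, r, hpr⟩ := List.append_of_mem
    (mem_of_length_eq_of_count_out_eq hpair (hclass _) hlen (by omega) haB)
  obtain ⟨R, hv⟩ : ∃ R, v = ofList p * of a * R := by
    refine ⟨ofList (r ++ (toList v).dropWhile P), ?_⟩
    conv_lhs =>
      rw [← ofList_toList v, ← List.takeWhile_append_dropWhile (p := P) (l := toList v)]
    rw [hpr]
    simp [ofList_append, ofList_cons, mul_assoc]
  have hmove := traceCon_mul_of_comm (I := I) (a := a) (p := ofList p) fun x hx =>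
    hI x a (Quotient.exact (hclass _ x (hpr ▸ List.mem_append_left _ hx)))
  refine ⟨ofList p * R, ?_⟩
  rw [hv, ← mul_assoc]
  exact (traceCon I).mul hmove ((traceCon I).refl _)

end ClassPow

section Matching

variable {Γ : Type} {I : Γ → Γ → Prop}

def matchingSetoid (hsym : ∀ a b, I a b → I b a) (hdeg : ∀ a b c, I a b → I a c → b = c) :
    Setoid Γ where
  r x y := x = y ∨ I x y
  iseqv :=
    { refl := fun _ => Or.inl rfl
      symm := by
        rintro x y (rfl | h)
        exacts [Or.inl rfl, Or.inr (hsym _ _ h)]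
      trans := by
        rintro x y z (rfl | hxy) (rfl | hyz)
        exacts [Or.inl rfl, Or.inr hyz, Or.inr hxy, Or.inl (hdeg y x z (hsym _ _ hxy) hyz)] }

theorem matchingSetoid_pair (hsym : ∀ a b, I a b → I b a)
    (hdeg : ∀ a b c, I a b → I a c → b = c) {x y z : Γ} (hx : matchingSetoid hsym hdeg x z)
    (hy : matchingSetoid hsym hdeg y z) : x = z ∨ y = z ∨ x = y := by
  rcases hx with hx | hx
  · exact Or.inl hx
  rcases hy with hy | hy
  · exact Or.inr (Or.inl hy)
  exact Or.inr (Or.inr (hdeg z x y (hsym _ _ hx) (hsym _ _ hy)))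

theorem exists_injective_of_degree_le_one [Countable Γ] (hsym : ∀ a b, I a b → I b a)
    (hdeg : ∀ a b c, I a b → I a c → b = c) :
    ∃ f : TraceMonoid I →* FreeMonoid Bool × FreeMonoid Bool, Function.Injective f :=
  exists_injective_of_reflectsHeads
    (fun _ _ hab => commute_classPowHom_of_rel (Or.inr hab))
    (fun _ _ hab => commute_classPowHom_of_rel (Or.inr hab))
    (reflectsHeads_classPowHom (s := matchingSetoid hsym hdeg) (fun _ _ h => h)
      fun _ _ _ => matchingSetoid_pair hsym hdeg)

end Matching

theorem stmt17_general (Γ : Type) [Countable Γ] (I : Γ → Γ → Prop)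
    (hsym : ∀ a b, I a b → I b a)
    (hcond : (∀ a b c : Γ, I a b → I a c → b = c) ∨ OneCompleteBipartiteComponent I) :
    ∃ f : TraceMonoid I →* FreeMonoid Bool × FreeMonoid Bool,
      Function.Injective f := by
  rcases hcond with hdeg | hbip
  · exact exists_injective_of_degree_le_one hsym hdeg
  · exact hbip.exists_injective

/-- If either every vertex of `(Γ, I)` has degree at most 1, or `(Γ, I)` has exactly
one nontrivial connected component which is complete bipartite, then the trace monoid
`M(Γ, I)` embeds into `{a,b}* × {c,d}*` (two free monoids over two-letter alphabets,
modelled by `Bool`). -/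
theorem stmt17 (Γ : Type) [Countable Γ] (I : Γ → Γ → Prop)
    (hirr : ∀ a, ¬ I a a) (hsym : ∀ a b, I a b → I b a)
    (hcond : (∀ a b c : Γ, I a b → I a c → b = c) ∨ OneCompleteBipartiteComponent I) :
    ∃ f : TraceMonoid I →* FreeMonoid Bool × FreeMonoid Bool,
      Function.Injective f :=
  stmt17_general Γ I hsym hcond
end
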